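/- Let Q, Z be n×n positive semidefinite real symmetric matrices, R an m×m positive definite real symmetric matrix, A n×n and B n×m real matrices. Then the Riccati update Q + AᵀZA − AᵀZB(R + BᵀZB)⁻¹BᵀZA is positive semidefinite; if moreover Q is positive definite, the update is positive definite. -/

import Mathlib

/-!
Completing the square: with `S = R + BᴴZB` and the gain `P = S⁻¹BᴴZA`, one has
`AᴴZA - AᴴZB S⁻¹ BᴴZA = (A - BP)ᴴZ(A - BP) + PᴴRP`, a sum of positive semidefinite matrices.
-/

open Matrix

namespace Matrix

variable {l m n K : Type*} [Fintype m] [Fintype n]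

theorem conjTranspose_mul_mul_sub_eq_add [Ring K] [StarRing K]
    {Z : Matrix n n K} {R : Matrix m m K} (hZ : Z.IsHermitian) (hR : R.IsHermitian)
    (A : Matrix n l K) (B : Matrix n m K) {P : Matrix m l K}
    (hP : (R + Bᴴ * Z * B) * P = Bᴴ * Z * A) :
    Aᴴ * Z * A - Pᴴ * (R + Bᴴ * Z * B) * P = (A - B * P)ᴴ * Z * (A - B * P) + Pᴴ * R * P := by
  have hPS : Pᴴ * (R + Bᴴ * Z * B) = Aᴴ * Z * B := by
    simpa [conjTranspose_mul, hZ.eq, hR.eq, Matrix.mul_assoc] using congrArg conjTranspose hP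
  have hexpand : (A - B * P)ᴴ * Z * (A - B * P) + Pᴴ * R * P
      = Aᴴ * Z * A - Aᴴ * Z * B * P - Pᴴ * (Bᴴ * Z * A) + Pᴴ * (R + Bᴴ * Z * B) * P := by
    simp only [conjTranspose_sub, conjTranspose_mul, Matrix.mul_add, Matrix.add_mul,
      Matrix.mul_sub, Matrix.sub_mul, Matrix.mul_assoc]
    abel
  rw [hexpand, ← hPS, ← hP, Matrix.mul_assoc Pᴴ]
  abel

theorem conjTranspose_mul_nonsing_inv_mul [CommRing K] [StarRing K] [DecidableEq m]
    {S : Matrix m m K} (hS : S.IsHermitian) (hdet : IsUnit S.det) (C : Matrix m l K) :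
    Cᴴ * S⁻¹ * C = (S⁻¹ * C)ᴴ * S * (S⁻¹ * C) := by
  rw [conjTranspose_mul, conjTranspose_nonsing_inv, hS.eq, Matrix.mul_assoc, Matrix.mul_assoc,
    mul_nonsing_inv_cancel_left _ _ hdet, Matrix.mul_assoc]

theorem PosSemidef.conjTranspose_mul_mul_sub [Field K] [PartialOrder K] [StarRing K]
    [StarOrderedRing K] [Finite l] [DecidableEq m] {Z : Matrix n n K} {R : Matrix m m K}
    (hZ : Z.PosSemidef) (hR : R.PosDef) (A : Matrix n l K) (B : Matrix n m K) :
    (Aᴴ * Z * A - Aᴴ * Z * B * (R + Bᴴ * Z * B)⁻¹ * Bᴴ * Z * A).PosSemidef := by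
  set S := R + Bᴴ * Z * B
  have hS : S.PosDef := hR.add_posSemidef (hZ.conjTranspose_mul_mul_same B)
  have hdet : IsUnit S.det := (isUnit_iff_isUnit_det S).mp hS.isUnit
  have hC : Aᴴ * Z * B * S⁻¹ * Bᴴ * Z * A = (Bᴴ * Z * A)ᴴ * S⁻¹ * (Bᴴ * Z * A) := by
    simp only [conjTranspose_mul, conjTranspose_conjTranspose, hZ.isHermitian.eq, Matrix.mul_assoc]
  rw [hC, conjTranspose_mul_nonsing_inv_mul hS.isHermitian hdet,
    conjTranspose_mul_mul_sub_eq_add hZ.isHermitian hR.isHermitian A B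
      (mul_nonsing_inv_cancel_left _ _ hdet)]
  exact (hZ.conjTranspose_mul_mul_same _).add (hR.posSemidef.conjTranspose_mul_mul_same _)

end Matrix

theorem riccati_update_posSemidef {n m : ℕ}
    (Q Z : Matrix (Fin n) (Fin n) ℝ) (R : Matrix (Fin m) (Fin m) ℝ)
    (A : Matrix (Fin n) (Fin n) ℝ) (B : Matrix (Fin n) (Fin m) ℝ)
    (hQ : Q.PosSemidef) (hZ : Z.PosSemidef) (hR : R.PosDef) :
    (Q + Aᵀ * Z * A - Aᵀ * Z * B * (R + Bᵀ * Z * B)⁻¹ * Bᵀ * Z * A).PosSemidef ∧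
    (Q.PosDef →
      (Q + Aᵀ * Z * A - Aᵀ * Z * B * (R + Bᵀ * Z * B)⁻¹ * Bᵀ * Z * A).PosDef) := by
  simp only [← conjTranspose_eq_transpose_of_trivial, add_sub_assoc]
  have h := hZ.conjTranspose_mul_mul_sub hR A B
  exact ⟨hQ.add h, fun hQ' => hQ'.add_posSemidef h⟩
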